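/- arXiv:1605.04703 — 8 statements merged into one kernel-verified Lean document; each statement's English description precedes it below -/
import Mathlib

section
/- Let λ ∈ ℂ be nonzero, μ, ν real constants with 2λ + μ ≠ 0. The boundary value problem v₁' + (μ+λ)v₁ − ν v₂ = 0, v₂' − λ v₂ = 0 on (0,1) with v₁(0) = 0 and v₁(1) = v₂(1) has a nonzero solution (v₁, v₂) if and only if ν e^{−μ−2λ} = ν − 2λ − μ. -/
/-!
Both equations are linear with constant coefficients. The second forces `v₂ = c e^{λx}`; then
`v₁ - c φ`, where `φ(x) = ν/(2λ+μ) (e^{λx} - e^{-(μ+λ)x})` is the particular solution vanishing at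
`0`, solves `w' = -(μ+λ) w` with `w(0) = 0`, hence vanishes. So the solutions are exactly the
multiples of `(φ, e^{λx})`, which is nonzero iff `c ≠ 0`, and the boundary condition at `1` reads
`φ(1) = e^λ`, i.e. the characteristic equation.
-/

open Set Complex

section ZeroDerivative

variable {E : Type*} [NormedAddCommGroup E] [NormedSpace ℝ E] {f : ℝ → E} {a b : ℝ}

theorem eq_left_of_hasDerivAt_zero_of_continuousOn_Icc (hf : ContinuousOn f (Icc a b))
    (hf' : ∀ x ∈ Ioo a b, HasDerivAt f 0 x) : ∀ x ∈ Icc a b, f x = f a := by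
  intro x hx
  rcases le_or_gt b a with hba | hab
  · rw [le_antisymm (hx.2.trans hba) hx.1]
  have hmid : (a + b) / 2 ∈ Ioo a b := ⟨by linarith, by linarith⟩
  have hconst : EqOn f (fun _ => f ((a + b) / 2)) (Ioo a b) := fun y hy =>
    isOpen_Ioo.is_const_of_deriv_eq_zero isPreconnected_Ioo
      (fun z hz => (hf' z hz).differentiableAt.differentiableWithinAt)
      (fun z hz => (hf' z hz).deriv) hy hmid
  have hconst' := hconst.of_subset_closure hf continuousOn_const Ioo_subset_Icc_self
    (closure_Ioo hab.ne).ge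
  rw [hconst' hx, hconst' (left_mem_Icc.2 hab.le)]

end ZeroDerivative

theorem hasDerivAt_cexp_mul_ofReal (c : ℂ) (x : ℝ) :
    HasDerivAt (fun t : ℝ => cexp (c * t)) (c * cexp (c * x)) x := by
  simpa [mul_comm] using (((hasDerivAt_id (x : ℂ)).const_mul c).cexp).comp_ofReal

theorem continuous_cexp_mul_ofReal (c : ℂ) : Continuous fun t : ℝ => cexp (c * t) := by
  fun_prop

theorem eq_mul_cexp_of_hasDerivAt_eq_mul {f : ℝ → ℂ} {c : ℂ} {a b : ℝ}
    (hf : ContinuousOn f (Icc a b)) (hf' : ∀ x ∈ Ioo a b, HasDerivAt f (c * f x) x) :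
    ∀ x ∈ Icc a b, f x = f a * cexp (c * (x - a)) := by
  have hconst := eq_left_of_hasDerivAt_zero_of_continuousOn_Icc
    (f := fun x => f x * cexp (-c * x)) (hf.mul (continuous_cexp_mul_ofReal _).continuousOn)
    (fun x hx => ((hf' x hx).mul (hasDerivAt_cexp_mul_ofReal (-c) x)).congr_deriv (by ring))
  intro x hx
  have hxa : f x * cexp (-c * x) = f a * cexp (-c * a) := hconst x hx
  calc f x = f x * cexp (-c * x) * cexp (c * x) := by
        rw [mul_assoc, ← Complex.exp_add, neg_mul, neg_add_cancel, Complex.exp_zero, mul_one]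
    _ = f a * cexp (c * (x - a)) := by
        rw [hxa, mul_assoc, ← Complex.exp_add]
        congr 2
        ring

section Mode

variable (lam : ℂ) (μ ν : ℝ)

/-- The first component of the solution with `v₂ = e^{λx}` and `v₁(0) = 0`. -/
noncomputable def modeV₁ (x : ℝ) : ℂ :=
  ν / (2 * lam + μ) * (cexp (lam * x) - cexp (-(μ + lam) * x))

theorem continuous_modeV₁ : Continuous (modeV₁ lam μ ν) := by
  unfold modeV₁; fun_prop

@[simp]
theorem modeV₁_zero : modeV₁ lam μ ν 0 = 0 := by
  simp [modeV₁]

variable {lam μ ν}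

theorem hasDerivAt_modeV₁ (hdenom : 2 * lam + (μ : ℂ) ≠ 0) (x : ℝ) :
    HasDerivAt (modeV₁ lam μ ν) (-(μ + lam) * modeV₁ lam μ ν x + ν * cexp (lam * x)) x := by
  refine (((hasDerivAt_cexp_mul_ofReal lam x).sub
    (hasDerivAt_cexp_mul_ofReal (-(μ + lam)) x)).const_mul (ν / (2 * lam + μ : ℂ))).congr_deriv ?_
  simp only [modeV₁]
  field_simp
  ring

theorem modeV₁_one_eq_cexp_iff (hdenom : 2 * lam + (μ : ℂ) ≠ 0) :
    modeV₁ lam μ ν 1 = cexp lam ↔ ν * cexp (-μ - 2 * lam) = ν - 2 * lam - μ := by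
  have hexp : cexp (-μ - 2 * lam) * cexp lam = cexp (-(μ + lam)) := by
    rw [← Complex.exp_add]
    congr 1
    ring
  have hexp_ne : cexp lam ≠ 0 := Complex.exp_ne_zero _
  simp only [modeV₁, ofReal_one, mul_one]
  rw [div_mul_eq_mul_div, div_eq_iff hdenom, ← hexp]
  constructor <;> intro h
  · apply mul_right_cancel₀ hexp_ne
    linear_combination -h
  · linear_combination -cexp lam * h

theorem eq_mul_modeV₁ (hdenom : 2 * lam + (μ : ℂ) ≠ 0) {v₁ : ℝ → ℂ} {b : ℝ} (c : ℂ)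
    (hcont : ContinuousOn v₁ (Icc 0 b))
    (hderiv : ∀ x ∈ Ioo 0 b,
      HasDerivAt v₁ (-(μ + lam) * v₁ x + ν * (c * cexp (lam * x))) x)
    (hzero : v₁ 0 = 0) :
    ∀ x ∈ Icc 0 b, v₁ x = c * modeV₁ lam μ ν x := by
  have hw := eq_mul_cexp_of_hasDerivAt_eq_mul (c := -(μ + lam))
    (f := fun x => v₁ x - c * modeV₁ lam μ ν x)
    (hcont.sub (continuous_const.mul (continuous_modeV₁ lam μ ν)).continuousOn)
    (fun x hx => ((hderiv x hx).sub ((hasDerivAt_modeV₁ hdenom x).const_mul c)).congr_deriv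
      (by ring))
  intro x hx
  simpa [hzero, sub_eq_zero] using hw x hx

end Mode

theorem stmt3_general (lam : ℂ) (μ ν : ℝ) (hdenom : 2 * lam + (μ : ℂ) ≠ 0) :
    (∃ v₁ v₂ : ℝ → ℂ,
      ContinuousOn v₁ (Set.Icc 0 1) ∧ ContinuousOn v₂ (Set.Icc 0 1) ∧
      (∀ x ∈ Set.Ioo (0:ℝ) 1,
        HasDerivAt v₁ (-((μ : ℂ) + lam) * v₁ x + (ν : ℂ) * v₂ x) x ∧
        HasDerivAt v₂ (lam * v₂ x) x) ∧
      v₁ 0 = 0 ∧ v₁ 1 = v₂ 1 ∧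
      ¬ (∀ x ∈ Set.Icc (0:ℝ) 1, v₁ x = 0 ∧ v₂ x = 0)) ↔
    (ν : ℂ) * Complex.exp (-(μ : ℂ) - 2 * lam) = (ν : ℂ) - 2 * lam - (μ : ℂ) := by
  rw [← modeV₁_one_eq_cexp_iff hdenom]
  constructor
  · rintro ⟨v₁, v₂, hcont₁, hcont₂, hode, hzero, hbdry, hnontriv⟩
    have hv₂ : ∀ x ∈ Icc (0 : ℝ) 1, v₂ x = v₂ 0 * cexp (lam * x) := by
      simpa using eq_mul_cexp_of_hasDerivAt_eq_mul hcont₂ fun x hx => (hode x hx).2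
    have hv₁ := eq_mul_modeV₁ hdenom (v₂ 0) hcont₁
      (fun x hx => hv₂ x (Ioo_subset_Icc_self hx) ▸ (hode x hx).1) hzero
    have hc : v₂ 0 ≠ 0 := fun hc => hnontriv fun x hx => by simp [hv₁ x hx, hv₂ x hx, hc]
    have h1 : (1 : ℝ) ∈ Icc (0 : ℝ) 1 := right_mem_Icc.2 zero_le_one
    rw [hv₁ 1 h1, hv₂ 1 h1, ofReal_one, mul_one] at hbdry
    exact mul_left_cancel₀ hc hbdry
  · intro hchar
    refine ⟨modeV₁ lam μ ν, fun x => cexp (lam * x), (continuous_modeV₁ lam μ ν).continuousOn,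
      (continuous_cexp_mul_ofReal lam).continuousOn,
      fun x _ => ⟨hasDerivAt_modeV₁ hdenom x, hasDerivAt_cexp_mul_ofReal lam x⟩,
      modeV₁_zero lam μ ν, by simpa using hchar, fun h => ?_⟩
    simpa using (h 0 (left_mem_Icc.2 zero_le_one)).2

/-- The boundary value problem `v₁' + (μ+λ)v₁ - ν v₂ = 0`, `v₂' - λ v₂ = 0` on `(0,1)`
with `v₁(0) = 0`, `v₁(1) = v₂(1)` has a nonzero solution iff `ν e^{-μ-2λ} = ν - 2λ - μ`. -/
theorem stmt3 (lam : ℂ) (μ ν : ℝ) (hlam : lam ≠ 0) (hdenom : 2 * lam + (μ : ℂ) ≠ 0) :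
    (∃ v₁ v₂ : ℝ → ℂ,
      ContinuousOn v₁ (Set.Icc 0 1) ∧ ContinuousOn v₂ (Set.Icc 0 1) ∧
      (∀ x ∈ Set.Ioo (0:ℝ) 1,
        HasDerivAt v₁ (-((μ : ℂ) + lam) * v₁ x + (ν : ℂ) * v₂ x) x ∧
        HasDerivAt v₂ (lam * v₂ x) x) ∧
      v₁ 0 = 0 ∧ v₁ 1 = v₂ 1 ∧
      ¬ (∀ x ∈ Set.Icc (0:ℝ) 1, v₁ x = 0 ∧ v₂ x = 0)) ↔
    (ν : ℂ) * Complex.exp (-(μ : ℂ) - 2 * lam) = (ν : ℂ) - 2 * lam - (μ : ℂ) :=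
  stmt3_general lam μ ν hdenom
end

section
/- Let d > 0, C_U > 0, C_Ũ > 0, γ > 0, and φ_norm ≥ 0. Suppose Z : [τ,∞) → [0,∞) is continuous and satisfies (a) Z(t) ≤ C_Ũ · φ_norm for τ ≤ t ≤ τ + d, and (b) Z(t) ≤ C_U β ∫_{t−d}^{t} Z(s) ds for t > τ + d, where 0 < β < ε and ε > 0 is defined by the equation (1/d)·log(C_U ε d) + C_U ε = −γ. Then Z(t) ≤ M e^{−γ(t−τ)} φ_norm for all t ≥ τ, where M = C_Ũ e^{(γ + C_U ε)d}. -/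
/-!
A continuous `Z` lying strictly below a strict supersolution `B` of the delay inequality
`Z(t) ≤ c ∫_{t-d}^t Z` on the initial window `[τ, τ + d]` stays below it forever: at a first
contact time `t₀` we would get `Z(t₀) ≤ c ∫ Z ≤ c ∫ B < B(t₀)`. The exponential
`K e^{-γ(t-τ)}` is such a supersolution as soon as `c (e^{γd} - 1) < γ`, and for `c = C_U β`
this follows from `β < ε`, since the equation for `ε` says exactly `C_U ε d = e^{-(γ + C_U ε) d}`.
Letting the constant `K` decrease to its critical value removes the strictness.
-/

open Set Real intervalIntegral

theorem lt_of_delay_integral_le {Z B : ℝ → ℝ} {τ d c : ℝ} (hd : 0 < d) (hc : 0 ≤ c)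
    (hZ : ContinuousOn Z (Ici τ)) (hB : ContinuousOn B (Ici τ))
    (hinit : ∀ t ∈ Icc τ (τ + d), Z t < B t)
    (hZ_le : ∀ t, τ + d < t → Z t ≤ c * ∫ s in (t - d)..t, Z s)
    (hB_gt : ∀ t, τ + d < t → c * ∫ s in (t - d)..t, B s < B t) :
    ∀ t, τ ≤ t → Z t < B t := by
  by_contra! hbad
  set S := {t ∈ Ici τ | B t ≤ Z t}
  have hS_closed : IsClosed S := isClosed_Ici.isClosed_le hB hZ
  have hS_bdd : BddBelow S := ⟨τ, fun t ht => ht.1⟩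
  obtain ⟨ht₀τ, ht₀⟩ : sInf S ∈ S := hS_closed.csInf_mem hbad hS_bdd
  set t₀ := sInf S
  have hbelow : ∀ s, τ ≤ s → s < t₀ → Z s < B s := fun s hs hst => by
    by_contra! h
    exact (csInf_le hS_bdd ⟨hs, h⟩).not_gt hst
  have ht₀d : τ + d < t₀ := by
    by_contra! h
    exact (hinit t₀ ⟨ht₀τ, h⟩).not_ge ht₀
  have hwindow : uIcc (t₀ - d) t₀ ⊆ Ici τ := by
    rw [uIcc_of_le (by linarith)]
    exact fun s hs => le_trans (by linarith) hs.1
  have hint : ∫ s in (t₀ - d)..t₀, Z s ≤ ∫ s in (t₀ - d)..t₀, B s :=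
    integral_mono_on_of_le_Ioo (by linarith) ((hZ.mono hwindow).intervalIntegrable)
      ((hB.mono hwindow).intervalIntegrable)
      fun s hs => (hbelow s (by linarith [hs.1]) hs.2).le
  linarith [hZ_le t₀ ht₀d, hB_gt t₀ ht₀d, mul_le_mul_of_nonneg_left hint hc]

theorem integral_exp_neg_mul_sub {γ : ℝ} (hγ : γ ≠ 0) (τ d t : ℝ) :
    ∫ s in (t - d)..t, exp (-γ * (s - τ)) = exp (-γ * (t - τ)) * (exp (γ * d) - 1) / γ := by
  simp_rw [show ∀ s, -γ * (s - τ) = -γ * s + γ * τ by intro s; ring]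
  have hshift : exp (-γ * (t - d) + γ * τ) = exp (-γ * t + γ * τ) * exp (γ * d) := by
    rw [← exp_add]; ring_nf
  rw [integral_comp_mul_add (f := exp) (neg_ne_zero.2 hγ), integral_exp, smul_eq_mul, hshift]
  field_simp
  ring

theorem mul_exp_sub_one_le_of_log_eq {a d γ : ℝ} (hd : 0 < d) (ha : 0 < a) (hγ : 0 ≤ γ)
    (h : (1 / d) * log (a * d) + a = -γ) : a * (exp (γ * d) - 1) ≤ γ := by
  have hfixed : a * d = exp (-((γ + a) * d)) := by
    rw [one_div, inv_mul_eq_div, div_add' _ _ _ hd.ne', div_eq_iff hd.ne'] at h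
    rw [← exp_log (by positivity : 0 < a * d)]
    congr 1
    linarith
  have hsplit : exp (-((γ + a) * d)) = exp (-(a * d)) * exp (-(γ * d)) := by
    rw [← exp_add]; ring_nf
  have hgrow : a * d * exp (γ * d) = exp (-(a * d)) := by
    rw [congrArg (· * exp (γ * d)) hfixed, ← exp_add]; ring_nf
  have hdecay : exp (-(a * d)) ≤ 1 := exp_le_one_iff.2 (by nlinarith)
  have hgap : 0 ≤ 1 - exp (-(γ * d)) := sub_nonneg.2 (exp_le_one_iff.2 (by nlinarith))
  have key : a * (exp (γ * d) - 1) * d ≤ γ * d :=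
    calc a * (exp (γ * d) - 1) * d = exp (-(a * d)) * (1 - exp (-(γ * d))) := by
          linear_combination hgrow - hfixed - hsplit
      _ ≤ 1 - exp (-(γ * d)) := mul_le_of_le_one_left hgap hdecay
      _ ≤ γ * d := by linarith [add_one_le_exp (-(γ * d))]
  exact le_of_mul_le_mul_right key hd

theorem lt_mul_exp_of_delay_integral_le {Z : ℝ → ℝ} {τ d c γ K : ℝ} (hd : 0 < d) (hc : 0 ≤ c)
    (hγ : 0 < γ) (hK : 0 < K) (hcγ : c * (exp (γ * d) - 1) < γ)
    (hZ : ContinuousOn Z (Ici τ))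
    (hinit : ∀ t ∈ Icc τ (τ + d), Z t < K * exp (-γ * (t - τ)))
    (hZ_le : ∀ t, τ + d < t → Z t ≤ c * ∫ s in (t - d)..t, Z s) :
    ∀ t, τ ≤ t → Z t < K * exp (-γ * (t - τ)) := by
  refine lt_of_delay_integral_le hd hc hZ (by fun_prop) hinit hZ_le fun t _ => ?_
  rw [intervalIntegral.integral_const_mul, integral_exp_neg_mul_sub hγ.ne']
  have hB : 0 < K * exp (-γ * (t - τ)) := by positivity
  calc c * (K * (exp (-γ * (t - τ)) * (exp (γ * d) - 1) / γ))
      = K * exp (-γ * (t - τ)) * (c * (exp (γ * d) - 1) / γ) := by ring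
    _ < K * exp (-γ * (t - τ)) := mul_lt_of_lt_one_right hB ((div_lt_one hγ).2 hcγ)

theorem le_mul_exp_of_delay_integral_le {Z : ℝ → ℝ} {τ d c γ K : ℝ} (hd : 0 < d) (hc : 0 ≤ c)
    (hγ : 0 < γ) (hK : 0 ≤ K) (hcγ : c * (exp (γ * d) - 1) < γ)
    (hZ : ContinuousOn Z (Ici τ))
    (hinit : ∀ t ∈ Icc τ (τ + d), Z t ≤ K * exp (-γ * (t - τ)))
    (hZ_le : ∀ t, τ + d < t → Z t ≤ c * ∫ s in (t - d)..t, Z s) :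
    ∀ t, τ ≤ t → Z t ≤ K * exp (-γ * (t - τ)) := by
  intro t ht
  rw [← div_le_iff₀ (exp_pos _)]
  refine le_of_forall_gt_imp_ge_of_dense fun K' hK' => (div_le_iff₀ (exp_pos _)).2 ?_
  refine (lt_mul_exp_of_delay_integral_le hd hc hγ (hK.trans_lt hK') hcγ hZ (fun s hs => ?_)
    hZ_le t ht).le
  exact (hinit s hs).trans_lt (mul_lt_mul_of_pos_right hK' (exp_pos _))

theorem stmt4_general (τ d CU CT γ Φ β ε : ℝ)
    (hd : 0 < d) (hCU : 0 < CU) (hCT : 0 < CT) (hγ : 0 < γ) (hΦ : 0 ≤ Φ)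
    (hβ0 : 0 < β) (hβε : β < ε)
    (hε : (1 / d) * Real.log (CU * ε * d) + CU * ε = -γ)
    (Z : ℝ → ℝ) (hZc : ContinuousOn Z (Set.Ici τ))
    (ha : ∀ t, τ ≤ t → t ≤ τ + d → Z t ≤ CT * Φ)
    (hb : ∀ t, τ + d < t → Z t ≤ CU * β * ∫ s in (t - d)..t, Z s) :
    ∀ t, τ ≤ t →
      Z t ≤ (CT * Real.exp ((γ + CU * ε) * d)) * Real.exp (-γ * (t - τ)) * Φ := by
  have hCUε : 0 < CU * ε := mul_pos hCU (hβ0.trans hβε)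
  have hcγ : CU * β * (exp (γ * d) - 1) < γ :=
    (mul_lt_mul_of_pos_right (mul_lt_mul_of_pos_left hβε hCU)
      (sub_pos.2 (one_lt_exp_iff.2 (mul_pos hγ hd)))).trans_le
      (mul_exp_sub_one_le_of_log_eq hd hCUε hγ.le hε)
  intro t ht
  rw [mul_right_comm]
  refine le_mul_exp_of_delay_integral_le hd (by positivity) hγ (by positivity) hcγ hZc
    (fun s hs => ?_) hb t ht
  have hexponent : 0 ≤ (γ + CU * ε) * d - γ * (s - τ) := by
    nlinarith [mul_le_mul_of_nonneg_left hs.2 hγ.le, mul_pos hCUε hd]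
  calc Z s ≤ CT * Φ := ha s hs.1 hs.2
    _ ≤ CT * Φ * exp ((γ + CU * ε) * d - γ * (s - τ)) :=
        le_mul_of_one_le_right (by positivity) (one_le_exp hexponent)
    _ = CT * exp ((γ + CU * ε) * d) * Φ * exp (-γ * (s - τ)) := by
        rw [sub_eq_add_neg, exp_add, ← neg_mul]; ring

/-- The key integral-inequality lemma: if `Z` is bounded by `C_Ũ Φ` on `[τ, τ+d]` and
satisfies `Z(t) ≤ C_U β ∫_{t-d}^t Z` for `t > τ + d` with `0 < β < ε`, where `ε` solves
`(1/d) log(C_U ε d) + C_U ε = -γ`, then `Z(t) ≤ M e^{-γ(t-τ)} Φ` with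
`M = C_Ũ e^{(γ + C_U ε) d}`. -/
theorem stmt4 (τ d CU CT γ Φ β ε : ℝ)
    (hd : 0 < d) (hCU : 0 < CU) (hCT : 0 < CT) (hγ : 0 < γ) (hΦ : 0 ≤ Φ)
    (hβ0 : 0 < β) (hβε : β < ε)
    (hε : (1 / d) * Real.log (CU * ε * d) + CU * ε = -γ)
    (Z : ℝ → ℝ) (hZc : ContinuousOn Z (Set.Ici τ)) (hZnn : ∀ t, τ ≤ t → 0 ≤ Z t)
    (ha : ∀ t, τ ≤ t → t ≤ τ + d → Z t ≤ CT * Φ)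
    (hb : ∀ t, τ + d < t → Z t ≤ CU * β * ∫ s in (t - d)..t, Z s) :
    ∀ t, τ ≤ t →
      Z t ≤ (CT * Real.exp ((γ + CU * ε) * d)) * Real.exp (-γ * (t - τ)) * Φ :=
  stmt4_general τ d CU CT γ Φ β ε hd hCU hCT hγ hΦ hβ0 hβε hε Z hZc ha hb
end

section
/- Suppose Z : [τ,∞) → [0,∞) is continuous, Z(t) ≤ C_Ũ Φ for τ ≤ t ≤ τ + d, and Z(t) ≤ C_U β ∫_{t−d}^{t} Z(s) ds for t > τ + d. Then for every integer k ≥ 1, Z(t) ≤ C_Ũ (C_U β d)^k e^{C_U β (t−τ−d)} Φ for all t with kd < t − τ ≤ (k+1)d. -/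
/-!
On a window `(t₀, t₀ + d]` the delay inequality `Z t ≤ M ∫_{t-d}^t Z` splits at `t₀`; since `Z ≥ 0`,
the part before `t₀` is at most `M ∫_{t₀-d}^{t₀} Z`, and Gronwall's inequality on the rest gives
`Z t ≤ (M ∫_{t₀-d}^{t₀} Z) e^{M (t - t₀)}`. Induction over the windows `[τ + k d, τ + (k+1) d]`
then carries the bound `d C_Ũ (M d)^k e^{M k d} Φ` on the integral of `Z` over the `k`-th window.
-/

open Set Real intervalIntegral MeasureTheory

theorem le_mul_exp_of_le_add_integral {u : ℝ → ℝ} {a b B M : ℝ} (hM : 0 ≤ M)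
    (hu : ContinuousOn u (Icc a b)) (h : ∀ t ∈ Ioc a b, u t ≤ B + M * ∫ s in a..t, u s) :
    ∀ t ∈ Ioc a b, u t ≤ B * exp (M * (t - a)) := by
  intro t ht
  have hab : a ≤ b := (ht.1.trans_le ht.2).le
  set F : ℝ → ℝ := fun t => B + M * ∫ s in a..t, u s
  set g : ℝ → ℝ := fun t => F t * exp (-(M * (t - a)))
  have hFc : ContinuousOn F (Icc a b) := by
    rw [← uIcc_of_le hab] at hu ⊢
    exact continuousOn_const.add
      (continuousOn_const.mul (continuousOn_primitive_interval hu.integrableOn_Icc))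
  have hF' : ∀ x ∈ Ioo a b, HasDerivAt F (M * u x) x := fun x hx =>
    ((integral_hasDerivAt_right
      ((hu.mono (Icc_subset_Icc le_rfl hx.2.le)).intervalIntegrable_of_Icc hx.1.le)
      ((hu.mono Ioo_subset_Icc_self).stronglyMeasurableAtFilter isOpen_Ioo x hx)
      (hu.continuousAt (Icc_mem_nhds hx.1 hx.2))).const_mul M).const_add B
  have hg : AntitoneOn g (Icc a b) := by
    refine antitoneOn_of_hasDerivWithinAt_nonpos (convex_Icc a b)
      (f' := fun x => M * (u x - F x) * exp (-(M * (x - a)))) (hFc.mul (by fun_prop)) ?_ ?_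
    · intro x hx
      rw [interior_Icc] at hx
      have hexp : HasDerivAt (fun x => exp (-(M * (x - a)))) (-M * exp (-(M * (x - a)))) x := by
        simpa [mul_comm] using (((hasDerivAt_id x).sub_const a).const_mul M).neg.exp
      exact (((hF' x hx).mul hexp).congr_deriv (by ring)).hasDerivWithinAt
    · intro x hx
      rw [interior_Icc] at hx
      have hux : u x - F x ≤ 0 := sub_nonpos.2 (h x (Ioo_subset_Ioc_self hx))
      exact mul_nonpos_of_nonpos_of_nonneg (mul_nonpos_of_nonneg_of_nonpos hM hux) (exp_pos _).le
  calc u t ≤ F t := h t ht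
    _ = g t * exp (M * (t - a)) := by
        simp only [g, mul_assoc, ← exp_add, neg_add_cancel, exp_zero, mul_one]
    _ ≤ g a * exp (M * (t - a)) :=
        mul_le_mul_of_nonneg_right (hg (left_mem_Icc.2 hab) (Ioc_subset_Icc_self ht) ht.1.le)
          (exp_pos _).le
    _ = B * exp (M * (t - a)) := by simp [g, F]

theorem le_mul_exp_of_le_delay_integral {Z : ℝ → ℝ} {t₀ d M : ℝ} (hM : 0 ≤ M)
    (hZc : ContinuousOn Z (Icc (t₀ - d) (t₀ + d))) (hZnn : ∀ t ∈ Icc (t₀ - d) t₀, 0 ≤ Z t)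
    (h : ∀ t ∈ Ioc t₀ (t₀ + d), Z t ≤ M * ∫ s in (t - d)..t, Z s) :
    ∀ t ∈ Ioc t₀ (t₀ + d), Z t ≤ (M * ∫ s in (t₀ - d)..t₀, Z s) * exp (M * (t - t₀)) := by
  intro t ht
  have hd : 0 ≤ d := by linarith [ht.1, ht.2]
  have hint : ∀ a b, t₀ - d ≤ a → a ≤ b → b ≤ t₀ + d → IntervalIntegrable Z volume a b :=
    fun a b ha hab hb => (hZc.mono (Icc_subset_Icc ha hb)).intervalIntegrable_of_Icc hab
  refine le_mul_exp_of_le_add_integral hM (hZc.mono (Icc_subset_Icc (by linarith) le_rfl))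
    (fun s hs => ?_) t ht
  have hpast : ∫ x in (s - d)..t₀, Z x ≤ ∫ x in (t₀ - d)..t₀, Z x :=
    integral_mono_interval (by linarith [hs.1]) (by linarith [hs.2]) le_rfl
      (ae_restrict_of_forall_mem measurableSet_Ioc fun x hx => hZnn x (Ioc_subset_Icc_self hx))
      (hint _ _ le_rfl (by linarith) (by linarith))
  calc Z s ≤ M * ∫ x in (s - d)..s, Z x := h s hs
    _ = M * (∫ x in (s - d)..t₀, Z x) + M * ∫ x in t₀..s, Z x := by
        rw [← mul_add, integral_add_adjacent_intervals
          (hint _ _ (by linarith [hs.1]) (by linarith [hs.2]) (by linarith))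
          (hint _ _ (by linarith) hs.1.le hs.2)]
    _ ≤ M * (∫ x in (t₀ - d)..t₀, Z x) + M * ∫ x in t₀..s, Z x := by gcongr

section

variable {Z : ℝ → ℝ} {τ d M CT Φ : ℝ}

theorem le_of_integral_window_le (hM : 0 ≤ M) (hZc : ContinuousOn Z (Ici τ))
    (hZnn : ∀ t, τ ≤ t → 0 ≤ Z t) (hb : ∀ t, τ + d < t → Z t ≤ M * ∫ s in (t - d)..t, Z s)
    (k : ℕ) (hk : ∫ s in (τ + k * d)..(τ + (k + 1) * d), Z s ≤
      d * (CT * (M * d) ^ k * exp (M * (k * d)) * Φ)) :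
    ∀ t ∈ Ioc (τ + (k + 1) * d) (τ + (k + 2) * d),
      Z t ≤ CT * (M * d) ^ (k + 1) * exp (M * (t - τ - d)) * Φ := by
  intro t ht
  have hd : 0 ≤ d := by nlinarith [ht.1, ht.2]
  have hk0 : (0 : ℝ) ≤ k * d := by positivity
  set t₀ := τ + (k + 1) * d
  have hwindow : t₀ - d = τ + k * d := by ring
  have hstep := le_mul_exp_of_le_delay_integral hM
    (hZc.mono fun x hx => by simp only [mem_Ici]; linarith [hx.1])
    (fun x hx => hZnn x (by linarith [hx.1])) (fun x hx => hb x (by linarith [hx.1]))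
    t ⟨ht.1, by linarith [ht.2]⟩
  rw [hwindow] at hstep
  have hexp : M * (k * d) + M * (t - t₀) = M * (t - τ - d) := by ring
  calc Z t ≤ (M * ∫ s in (τ + k * d)..t₀, Z s) * exp (M * (t - t₀)) := hstep
    _ ≤ (M * (d * (CT * (M * d) ^ k * exp (M * (k * d)) * Φ))) * exp (M * (t - t₀)) := by
        gcongr
    _ = CT * (M * d) ^ (k + 1) * exp (M * (t - τ - d)) * Φ := by
        rw [← hexp, exp_add, pow_succ]; ring

theorem integral_window_le (hd : 0 ≤ d) (hM : 0 ≤ M) (hCT : 0 ≤ CT) (hΦ : 0 ≤ Φ)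
    (hZc : ContinuousOn Z (Ici τ)) (hZnn : ∀ t, τ ≤ t → 0 ≤ Z t)
    (ha : ∀ t, τ ≤ t → t ≤ τ + d → Z t ≤ CT * Φ)
    (hb : ∀ t, τ + d < t → Z t ≤ M * ∫ s in (t - d)..t, Z s) :
    ∀ k : ℕ, ∫ s in (τ + k * d)..(τ + (k + 1) * d), Z s ≤
      d * (CT * (M * d) ^ k * exp (M * (k * d)) * Φ)
  | 0 => by
    have hZ : IntervalIntegrable Z volume τ (τ + d) :=
      (hZc.mono Icc_subset_Ici_self).intervalIntegrable_of_Icc (by linarith)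
    calc ∫ s in (τ + ((0 : ℕ) : ℝ) * d)..(τ + (((0 : ℕ) : ℝ) + 1) * d), Z s
        = ∫ s in τ..(τ + d), Z s := by simp
      _ ≤ ∫ _ in τ..(τ + d), CT * Φ :=
        integral_mono_on (by linarith) hZ intervalIntegrable_const fun x hx => ha x hx.1 hx.2
      _ = _ := by simp; ring
  | k + 1 => by
    have hpt := le_of_integral_window_le hM hZc hZnn hb k
      (integral_window_le hd hM hCT hΦ hZc hZnn ha hb k)
    have hk0 : (0 : ℝ) ≤ (k + 1) * d := by positivity
    have hZ : IntervalIntegrable Z volume (τ + (k + 1) * d) (τ + (k + 1 + 1) * d) :=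
      (hZc.mono fun x hx => le_trans (by linarith) hx.1).intervalIntegrable_of_Icc (by nlinarith)
    push_cast
    calc ∫ s in (τ + (k + 1) * d)..(τ + (k + 1 + 1) * d), Z s
        ≤ ∫ _ in (τ + (k + 1) * d)..(τ + (k + 1 + 1) * d),
            CT * (M * d) ^ (k + 1) * exp (M * ((k + 1) * d)) * Φ :=
        integral_mono_on_of_le_Ioo (by nlinarith) hZ intervalIntegrable_const fun s hs =>
          (hpt s ⟨hs.1, by linarith [hs.2]⟩).trans (by gcongr; linarith [hs.2])
      _ = _ := by simp only [intervalIntegral.integral_const, smul_eq_mul]; ring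

end

/-- The inductive step estimate: under the bounds of the integral inequality lemma,
`Z(t) ≤ C_Ũ (C_U β d)^k e^{C_U β (t-τ-d)} Φ` on `kd < t - τ ≤ (k+1)d`. -/
theorem stmt6 (τ d CU CT β Φ : ℝ) (hd : 0 < d) (hCU : 0 < CU) (hCT : 0 < CT)
    (hβ : 0 < β) (hΦ : 0 ≤ Φ)
    (Z : ℝ → ℝ) (hZc : ContinuousOn Z (Set.Ici τ)) (hZnn : ∀ t, τ ≤ t → 0 ≤ Z t)
    (ha : ∀ t, τ ≤ t → t ≤ τ + d → Z t ≤ CT * Φ)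
    (hb : ∀ t, τ + d < t → Z t ≤ CU * β * ∫ s in (t - d)..t, Z s) :
    ∀ k : ℕ, 1 ≤ k → ∀ t : ℝ, (k : ℝ) * d < t - τ → t - τ ≤ ((k : ℝ) + 1) * d →
      Z t ≤ CT * (CU * β * d) ^ k * Real.exp (CU * β * (t - τ - d)) * Φ := by
  intro k hk t ht₁ ht₂
  obtain ⟨j, rfl⟩ := Nat.exists_eq_add_of_le' hk
  have hM : 0 ≤ CU * β := by positivity
  refine le_of_integral_window_le hM hZc hZnn hb j
    (integral_window_le hd.le hM hCT.le hΦ hZc hZnn ha hb j) t ⟨?_, ?_⟩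
  all_goals push_cast at ht₁ ht₂; linarith
end

section
/- Let φ : ℝ → ℝ be continuous and 1-periodic. Then the pair u₁(x,t) = φ(x−t), u₂(x,t) = x·φ(x−t) is a continuous solution of the system ∂_t u₁ + ∂_x u₁ = 0, ∂_t u₂ + ∂_x u₂ − u₁ = 0 on (0,1)×(0,∞) (in the sense of the characteristic integral equations; a classical solution on any region where φ is C¹), satisfying the boundary conditions u₁(0,t) = u₂(1,t) and u₂(0,t) = 0 for all t, and the initial conditions u₁(x,0) = φ(x), u₂(x,0) = x φ(x). -/
theorem hasDerivAt_mul_comp_sub_along_characteristic {𝕜 : Type*} [NontriviallyNormedField 𝕜]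
    (φ : 𝕜 → 𝕜) (x t s : 𝕜) :
    HasDerivAt (fun s' => (x + s') * φ (x + s' - (t + s'))) (φ (x + s - (t + s))) s := by
  have hfrozen : ∀ s' : 𝕜, x + s' - (t + s') = x - t := fun s' => by ring
  simp only [hfrozen]
  simpa using ((hasDerivAt_id s).const_add x).mul_const (φ (x - t))

theorem stmt7_general (φ : ℝ → ℝ) (hper : Function.Periodic φ 1) :
    let u₁ : ℝ → ℝ → ℝ := fun x t => φ (x - t)
    let u₂ : ℝ → ℝ → ℝ := fun x t => x * φ (x - t)
    (∀ x t s : ℝ, u₁ (x + s) (t + s) = u₁ x t) ∧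
    (∀ x t s : ℝ, HasDerivAt (fun s' => u₂ (x + s') (t + s')) (u₁ (x + s) (t + s)) s) ∧
    (∀ t : ℝ, u₁ 0 t = u₂ 1 t) ∧ (∀ t : ℝ, u₂ 0 t = 0) ∧
    (∀ x : ℝ, u₁ x 0 = φ x) ∧ (∀ x : ℝ, u₂ x 0 = x * φ x) := by
  refine ⟨fun x t s => congrArg φ (add_sub_add_right_eq_sub x t s),
    hasDerivAt_mul_comp_sub_along_characteristic φ, fun t => ?_,
    fun t => zero_mul _, fun x => by simp, fun x => by simp⟩
  simp only [zero_sub, one_mul, hper.sub_eq']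

/-- For continuous 1-periodic `φ`, the pair `u₁(x,t) = φ(x-t)`, `u₂(x,t) = x φ(x-t)` is a
continuous solution (in the characteristic sense) of `∂_t u₁ + ∂_x u₁ = 0`,
`∂_t u₂ + ∂_x u₂ - u₁ = 0` satisfying `u₁(0,t) = u₂(1,t)`, `u₂(0,t) = 0`,
`u₁(x,0) = φ(x)`, `u₂(x,0) = x φ(x)`. -/
theorem stmt7 (φ : ℝ → ℝ) (hc : Continuous φ) (hper : Function.Periodic φ 1) :
    let u₁ : ℝ → ℝ → ℝ := fun x t => φ (x - t)
    let u₂ : ℝ → ℝ → ℝ := fun x t => x * φ (x - t)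
    (∀ x t s : ℝ, u₁ (x + s) (t + s) = u₁ x t) ∧
    (∀ x t s : ℝ, HasDerivAt (fun s' => u₂ (x + s') (t + s')) (u₁ (x + s) (t + s)) s) ∧
    (∀ t : ℝ, u₁ 0 t = u₂ 1 t) ∧ (∀ t : ℝ, u₂ 0 t = 0) ∧
    (∀ x : ℝ, u₁ x 0 = φ x) ∧ (∀ x : ℝ, u₂ x 0 = x * φ x) :=
  stmt7_general φ hper
end

section
/- Let φ : ℝ → ℝ be continuous, 1-periodic, continuously differentiable on (0,1), but not continuously differentiable on all of ℝ (e.g. φ' has a jump at integers). Then for every t > 0, the function x ↦ x·φ(x−t) on [0,1] is not continuously differentiable on (0,1) when t ∉ ℤ is such that x−t crosses an integer for some x ∈ (0,1); in particular, for each T > 0 there exists t > T such that the solution u₂(·,t) = x φ(x−t) of the coupled transport system is not C¹ on [0,1]. -/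
/-!
Periodicity carries a point where `φ` fails to be C¹ to every integer translate of it, so for
suitable `t > T` the shifted function `x ↦ φ (x - t)` fails to be C¹ at `x = 1/2`. Away from
`x = 0` the factor `x` can be divided out, so `x ↦ x φ (x - t)` is not C¹ at `1/2` either.
-/

section

variable {𝕜 E F : Type*} [NontriviallyNormedField 𝕜] [NormedAddCommGroup E] [NormedSpace 𝕜 E]
  [NormedAddCommGroup F] [NormedSpace 𝕜 F] {n : WithTop ℕ∞}

theorem contDiffAt_comp_sub_const_iff {f : E → F} {a x : E} :
    ContDiffAt 𝕜 n (fun y => f (y - a)) x ↔ ContDiffAt 𝕜 n f (x - a) := by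
  refine ⟨fun h => ?_, fun h => h.comp x (contDiffAt_id.sub contDiffAt_const)⟩
  have h' : ContDiffAt 𝕜 n (fun y => f (y - a)) (x - a + a) := by rwa [sub_add_cancel]
  simpa [Function.comp_def] using h'.comp (x - a) (contDiffAt_id.add contDiffAt_const)

theorem Function.Periodic.contDiffAt_sub_int_mul_iff {f : 𝕜 → F} {c : 𝕜}
    (hf : Function.Periodic f c) (k : ℤ) {x : 𝕜} :
    ContDiffAt 𝕜 n f (x - k * c) ↔ ContDiffAt 𝕜 n f x := by
  rw [← contDiffAt_comp_sub_const_iff]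
  simp only [hf.sub_int_mul_eq]

theorem ContDiffAt.of_id_smul {g : 𝕜 → F} {x₀ : 𝕜}
    (hg : ContDiffAt 𝕜 n (fun x => x • g x) x₀) (hx₀ : x₀ ≠ 0) : ContDiffAt 𝕜 n g x₀ := by
  refine ((contDiffAt_inv 𝕜 hx₀).smul hg).congr_of_eventuallyEq ?_
  filter_upwards [eventually_ne_nhds hx₀] with x hx
  exact (inv_smul_smul₀ hx (g x)).symm

end

theorem stmt8_general (φ : ℝ → ℝ) (hper : Function.Periodic φ 1)
    (hbad : ¬ ContDiff ℝ 1 φ) :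
    ∀ T : ℝ, 0 < T → ∃ t : ℝ, T < t ∧
      ¬ ContDiffOn ℝ 1 (fun x => x * φ (x - t)) (Set.Ioo 0 1) := by
  intro T _
  obtain ⟨x₀, hx₀⟩ : ∃ x₀, ¬ ContDiffAt ℝ 1 φ x₀ := by
    simpa [contDiff_iff_contDiffAt] using hbad
  obtain ⟨k, hk⟩ := exists_int_gt (T - 1 / 2 + x₀)
  refine ⟨1 / 2 - x₀ + k, by linarith, fun hC => hx₀ ?_⟩
  have hprod : ContDiffAt ℝ 1 (fun x => x * φ (x - (1 / 2 - x₀ + k))) (1 / 2) :=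
    hC.contDiffAt (Ioo_mem_nhds (by norm_num) (by norm_num))
  have hshift := contDiffAt_comp_sub_const_iff.mp (hprod.of_id_smul (by norm_num))
  rwa [show (1 / 2 : ℝ) - (1 / 2 - x₀ + k) = x₀ - k * 1 by ring,
    hper.contDiffAt_sub_int_mul_iff] at hshift

/-- No smoothing without the Levy condition: if `φ` is continuous, 1-periodic, C¹ on `(0,1)`
but not C¹ on all of `ℝ`, then for every `T > 0` there is `t > T` such that
`x ↦ x φ(x - t)` is not C¹ on `(0,1)`. -/
theorem stmt8 (φ : ℝ → ℝ) (hc : Continuous φ) (hper : Function.Periodic φ 1)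
    (hreg : ContDiffOn ℝ 1 φ (Set.Ioo 0 1)) (hbad : ¬ ContDiff ℝ 1 φ) :
    ∀ T : ℝ, 0 < T → ∃ t : ℝ, T < t ∧
      ¬ ContDiffOn ℝ 1 (fun x => x * φ (x - t)) (Set.Ioo 0 1) :=
  stmt8_general φ hper hbad
end

section
/- Let ε ≠ 0 be a real number. For the decoupled system ∂_t u₁ + ∂_x u₁ = 0, ∂_t u₂ + ∂_x u₂ = ε u₂, ∂_t u₃ − ∂_x u₃ = 0 with boundary conditions u₁(0,t) = u₃(0,t), u₂(0,t) = u₃(0,t), u₃(1,t) = u₁(1,t) − u₂(1,t), the iterated boundary operator satisfies ((CP)³z)₁(x,t) = (1 − e^ε) u₃(0, t − x − 2) for all continuous bounded z = (u₁,u₂,u₃); in particular, for no k ∈ ℕ does (CP)^k z vanish identically for all z, while for ε = 0 one has (CP)³ z ≡ 0 for all z. -/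
/-!
Each round trip of a signal through the boundary costs time 2 and multiplies it by `1 - e^ε`:
the value of `u₃` at `x = 0` is copied into `u₁` and `u₂`, only `u₂` is amplified by `e^{εx}`
on its way to `x = 1`, and there `u₃` receives the difference `u₁ - u₂`. For `ε = 0` the two
copies cancel exactly; for `ε ≠ 0` a constant `u₃` survives every number of round trips.
-/

/-- The composition `C ∘ P` for the system `∂_t u₁ + ∂_x u₁ = 0`, `∂_t u₂ + ∂_x u₂ = ε u₂`,
`∂_t u₃ - ∂_x u₃ = 0` with boundary conditions `u₁(0,t) = u₃(0,t)`, `u₂(0,t) = u₃(0,t)`,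
`u₃(1,t) = u₁(1,t) - u₂(1,t)`. -/
noncomputable def stmt10CP (ε : ℝ)
    (z : (ℝ → ℝ → ℝ) × (ℝ → ℝ → ℝ) × (ℝ → ℝ → ℝ)) :
    (ℝ → ℝ → ℝ) × (ℝ → ℝ → ℝ) × (ℝ → ℝ → ℝ) :=
  (fun x t => z.2.2 0 (t - x),
   fun x t => Real.exp (ε * x) * z.2.2 0 (t - x),
   fun x t => z.1 1 (t + x - 1) - z.2.1 1 (t + x - 1))

namespace Stmt10

open Real

abbrev State : Type := (ℝ → ℝ → ℝ) × (ℝ → ℝ → ℝ) × (ℝ → ℝ → ℝ)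

def delay (s : ℝ) (w : State) : State :=
  (fun x t => w.1 x (t - s), fun x t => w.2.1 x (t - s), fun x t => w.2.2 x (t - s))

lemma iterate_three_stmt10CP (ε : ℝ) (z : State) :
    (stmt10CP ε)^[3] z = (1 - exp ε) • delay 2 (stmt10CP ε z) := by
  simp only [Function.iterate_succ_apply', Function.iterate_zero_apply, stmt10CP, delay]
  refine Prod.ext ?_ (Prod.ext ?_ ?_) <;> funext x t <;>
    simp only [Prod.smul_fst, Prod.smul_snd, Pi.smul_apply, smul_eq_mul, mul_one] <;>
    ring_nf

lemma stmt10CP_zero (ε : ℝ) : stmt10CP ε 0 = 0 := by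
  simp only [stmt10CP]
  refine Prod.ext ?_ (Prod.ext ?_ ?_) <;> funext x t <;> simp

def leftMoving (d : ℝ) : State :=
  (fun _ _ => 0, fun _ _ => 0, fun _ _ => d)

noncomputable def rightMoving (ε c : ℝ) : State :=
  (fun _ _ => c, fun x _ => exp (ε * x) * c, fun _ _ => 0)

lemma leftMoving_ne_zero {d : ℝ} (hd : d ≠ 0) : leftMoving d ≠ 0 :=
  fun h => hd (congrArg (fun w : State => w.2.2 0 0) h)

lemma stmt10CP_leftMoving (ε d : ℝ) : stmt10CP ε (leftMoving d) = rightMoving ε d := by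
  simp only [stmt10CP, leftMoving, rightMoving, sub_zero]

lemma stmt10CP_rightMoving (ε c : ℝ) :
    stmt10CP ε (rightMoving ε c) = leftMoving ((1 - exp ε) * c) := by
  simp only [stmt10CP, rightMoving, leftMoving, mul_zero, mul_one]
  congr
  funext x t
  ring

lemma iterate_two_mul_stmt10CP_leftMoving (ε : ℝ) (m : ℕ) (d : ℝ) :
    (stmt10CP ε)^[2 * m] (leftMoving d) = leftMoving ((1 - exp ε) ^ m * d) := by
  induction m generalizing d with
  | zero => simp
  | succ m ih =>
    rw [Nat.mul_succ, Function.iterate_add_apply, Function.iterate_succ_apply',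
      Function.iterate_one, stmt10CP_leftMoving, stmt10CP_rightMoving, ih, pow_succ, mul_assoc]

/-- Since `CP 0 = 0`, a vanishing iterate would force the even iterate `(CP)^[2k]` to vanish. -/
lemma iterate_stmt10CP_leftMoving_ne_zero {ε d : ℝ} (hε : 1 - exp ε ≠ 0) (hd : d ≠ 0) (k : ℕ) :
    (stmt10CP ε)^[k] (leftMoving d) ≠ 0 := by
  intro h
  apply leftMoving_ne_zero (mul_ne_zero (pow_ne_zero k hε) hd)
  rw [← iterate_two_mul_stmt10CP_leftMoving, two_mul, Function.iterate_add_apply, h,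
    Function.iterate_fixed (stmt10CP_zero ε)]

end Stmt10

open Stmt10 in
/-- For `ε ≠ 0`: `((CP)³z)₁(x,t) = (1 - e^ε) u₃(0, t - x - 2)`; no power of `CP` annihilates
all continuous bounded `z`; while for `ε = 0` one has `(CP)³ z ≡ 0`. -/
theorem stmt10 (ε : ℝ) (hε : ε ≠ 0) :
    (∀ z : (ℝ → ℝ → ℝ) × (ℝ → ℝ → ℝ) × (ℝ → ℝ → ℝ), ∀ x t : ℝ,
      ((stmt10CP ε)^[3] z).1 x t = (1 - Real.exp ε) * z.2.2 0 (t - x - 2)) ∧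
    (∀ k : ℕ, ∃ z : (ℝ → ℝ → ℝ) × (ℝ → ℝ → ℝ) × (ℝ → ℝ → ℝ),
      (Continuous fun q : ℝ × ℝ => z.1 q.1 q.2) ∧
      (Continuous fun q : ℝ × ℝ => z.2.1 q.1 q.2) ∧
      (Continuous fun q : ℝ × ℝ => z.2.2 q.1 q.2) ∧
      (∃ M, ∀ x t, |z.1 x t| ≤ M ∧ |z.2.1 x t| ≤ M ∧ |z.2.2 x t| ≤ M) ∧
      (stmt10CP ε)^[k] z ≠
        ((fun _ _ => 0, fun _ _ => 0, fun _ _ => 0) :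
          (ℝ → ℝ → ℝ) × (ℝ → ℝ → ℝ) × (ℝ → ℝ → ℝ))) ∧
    (∀ z : (ℝ → ℝ → ℝ) × (ℝ → ℝ → ℝ) × (ℝ → ℝ → ℝ),
      (stmt10CP 0)^[3] z =
        ((fun _ _ => 0, fun _ _ => 0, fun _ _ => 0) :
          (ℝ → ℝ → ℝ) × (ℝ → ℝ → ℝ) × (ℝ → ℝ → ℝ))) := by
  have hfactor : 1 - Real.exp ε ≠ 0 := sub_ne_zero.2 (Ne.symm (mt (Real.exp_eq_one_iff ε).1 hε))
  refine ⟨fun z x t => ?_, fun k => ⟨leftMoving 1, continuous_const, continuous_const,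
    continuous_const, ⟨1, fun _ _ => by simp [leftMoving]⟩,
    iterate_stmt10CP_leftMoving_ne_zero hfactor one_ne_zero k⟩, fun z => ?_⟩
  · rw [iterate_three_stmt10CP]
    simp only [Prod.smul_fst, Pi.smul_apply, smul_eq_mul, delay, stmt10CP]
    ring_nf
  · rw [iterate_three_stmt10CP, Real.exp_zero, sub_self, zero_smul]
    rfl
end

section
/- Let a_j, a_k : [0,1]×ℝ → ℝ be C¹ with |a_j|, |a_k| ≥ Λ₀ > 0, and let ω_j, ω_k be the corresponding characteristic flows (∂_ξ ω_s(ξ,x,t) = 1/a_s(ξ,ω_s(ξ,x,t)), ω_s(x,x,t) = t). Fix η ∈ [0,1], x, t. Then the map ξ ↦ θ(ξ) = ω_k(η, ξ, ω_j(ξ,x,t)) is differentiable with dθ/dξ = [(a_k(ξ,ω_j(ξ,x,t)) − a_j(ξ,ω_j(ξ,x,t)))/(a_j(ξ,ω_j(ξ,x,t)) a_k(ξ,ω_j(ξ,x,t)))] · ∂₃ω_k(η, ξ, ω_j(ξ,x,t)). -/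
/-!
Since `1/a_k` is `C¹`, characteristics are unique and `ω_k` has the flow property
`ω_k(η, b, ω_k(b, x, t)) = ω_k(η, x, t)`. Transporting `ξ' ↦ ω_j(ξ',x,t)` back to the fixed time `ξ`
along the `k`-characteristics, `g(ξ') = ω_k(ξ, ξ', ω_j(ξ',x,t))`, the flow property gives
`θ = ω_k(η, ξ, ·) ∘ g`, so the claim is the chain rule once `g'(ξ) = 1/a_j - 1/a_k`. That comes from
`ω_k(ξ', ξ, g ξ') = ω_j(ξ',x,t)`: the `k`-characteristic through `g ξ'` moves with speed
`1/a_k(ξ, ω_j(ξ,x,t)) + o(1)` near `ξ`, because `1/a_k` is continuous and bounded.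
-/

open Set Filter Metric Topology Function

section Flow

variable {E : Type*} [NormedAddCommGroup E] [NormedSpace ℝ E]

theorem ODE_solution_unique_of_locallyLipschitz {v : ℝ → E → E}
    (hv : LocallyLipschitz (uncurry v)) {f g : ℝ → E}
    (hf : ∀ t, HasDerivAt f (v t (f t)) t) (hg : ∀ t, HasDerivAt g (v t (g t)) t)
    {t₀ : ℝ} (heq : f t₀ = g t₀) : f = g := by
  have hfc : Continuous f := continuous_iff_continuousAt.2 fun t => (hf t).continuousAt
  have hgc : Continuous g := continuous_iff_continuousAt.2 fun t => (hg t).continuousAt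
  have hopen : IsOpen {t | f t = g t} := by
    refine isOpen_iff_mem_nhds.2 fun τ (hτ : f τ = g τ) => ?_
    obtain ⟨K, U, hU, hLip⟩ := hv (τ, f τ)
    obtain ⟨ε, hε, hball⟩ := Metric.mem_nhds_iff.1 hU
    have hvLip : ∀ t ∈ ball τ ε, LipschitzOnWith K (v t) (ball (f τ) ε) := fun t ht => by
      have hmaps : MapsTo (Prod.mk t) (ball (f τ) ε) U := fun y hy =>
        hball (ball_prod_same τ (f τ) ε ▸ ⟨ht, hy⟩)
      have h := hLip.comp (LipschitzWith.prodMk_left t).lipschitzOnWith hmaps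
      rwa [mul_one] at h
    have hsol : ∀ h : ℝ → E, Continuous h → h τ = f τ → (∀ t, HasDerivAt h (v t (h t)) t) →
        ∀ᶠ t in 𝓝 τ, HasDerivAt h (v t (h t)) t ∧ h t ∈ ball (f τ) ε := fun h hc hτ hd =>
      (hc.continuousAt.eventually_mem (hτ ▸ ball_mem_nhds (f τ) hε)).mono fun t ht => ⟨hd t, ht⟩
    exact ODE_solution_unique_of_eventually (eventually_of_mem (ball_mem_nhds τ hε) hvLip)
      (hsol f hfc rfl hf) (hsol g hgc hτ.symm hg) hτ
  have huniv := IsClopen.eq_univ ⟨isClosed_eq hfc hgc, hopen⟩ ⟨t₀, heq⟩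
  exact funext fun t => (huniv ▸ mem_univ t : t ∈ {t | f t = g t})

variable {v : ℝ → E → E} {ω : ℝ → ℝ → E → E}
  (hω : ∀ τ s y, HasDerivAt (fun τ' => ω τ' s y) (v τ (ω τ s y)) τ) (hinit : ∀ s y, ω s s y = y)
include hω hinit

theorem flow_comp (hv : LocallyLipschitz (uncurry v)) (η b s : ℝ) (y : E) :
    ω η b (ω b s y) = ω η s y :=
  congrFun (ODE_solution_unique_of_locallyLipschitz hv (fun τ => hω τ b (ω b s y))
    (fun τ => hω τ s y) (t₀ := b) (by rw [hinit])) η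

theorem norm_flow_sub_le {M : ℝ} (hM : ∀ τ y, ‖v τ y‖ ≤ M) (τ s : ℝ) (y : E) :
    ‖ω τ s y - y‖ ≤ M * |τ - s| := by
  have := Convex.norm_image_sub_le_of_norm_hasDerivWithin_le (s := univ)
    (fun σ _ => (hω σ s y).hasDerivWithinAt) (fun σ _ => hM σ _) convex_univ (mem_univ s)
    (mem_univ τ)
  rwa [hinit, Real.norm_eq_abs] at this

theorem tendsto_flow_of_tendsto {M : ℝ} (hM : ∀ τ y, ‖v τ y‖ ≤ M) {s : ℝ} {p : E}
    {y : ℝ → E} (hy : Tendsto y (𝓝 s) (𝓝 p)) :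
    Tendsto (fun q : ℝ × ℝ => ω q.1 s (y q.2)) (𝓝 (s, s)) (𝓝 p) := by
  have hsmall : Tendsto (fun q : ℝ × ℝ => ω q.1 s (y q.2) - y q.2) (𝓝 (s, s)) (𝓝 0) := by
    refine squeeze_zero_norm (fun q => norm_flow_sub_le hω hinit hM q.1 s (y q.2)) ?_
    have hlin : Continuous fun q : ℝ × ℝ => M * |q.1 - s| := by fun_prop
    simpa using hlin.tendsto (s, s)
  simpa using hsmall.add (hy.comp (continuous_snd.tendsto (s, s)))

theorem isLittleO_flow_sub {M : ℝ} (hM : ∀ τ y, ‖v τ y‖ ≤ M) {s : ℝ} {p : E}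
    (hvc : ContinuousAt (uncurry v) (s, p)) {y : ℝ → E} (hy : Tendsto y (𝓝 s) (𝓝 p)) :
    (fun τ => ω τ s (y τ) - y τ - (τ - s) • v s p) =o[𝓝 s] fun τ => τ - s := by
  refine Asymptotics.isLittleO_iff.2 fun ε hε => ?_
  have hspeed : Tendsto (fun q : ℝ × ℝ => v q.1 (ω q.1 s (y q.2))) (𝓝 (s, s)) (𝓝 (v s p)) :=
    hvc.tendsto.comp ((continuous_fst.tendsto (s, s)).prodMk_nhds
      (tendsto_flow_of_tendsto hω hinit hM hy))
  obtain ⟨δ, hδ, hnear⟩ := Metric.eventually_nhds_iff_ball.1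
    (hspeed.eventually (closedBall_mem_nhds (v s p) hε))
  filter_upwards [ball_mem_nhds s hδ] with τ hτ
  have hderiv : ∀ σ ∈ uIcc s τ, ‖v σ (ω σ s (y τ)) - v s p‖ ≤ ε := fun σ hσ => by
    refine mem_closedBall_iff_norm.1 (hnear (σ, τ) ?_)
    rw [← ball_prod_same]
    exact ⟨(abs_sub_left_of_mem_uIcc hσ).trans_lt hτ, hτ⟩
  have := Convex.norm_image_sub_le_of_norm_hasDerivWithin_le
    (f := fun σ => ω σ s (y τ) - (σ - s) • v s p)
    (fun σ _ => ((hω σ s (y τ)).sub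
      (((hasDerivAt_id σ).sub_const s).smul_const (v s p))).hasDerivWithinAt)
    (by simpa using hderiv) (convex_uIcc s τ) left_mem_uIcc right_mem_uIcc
  simpa [hinit, sub_right_comm] using this

theorem hasDerivAt_flow_back (hv : LocallyLipschitz (uncurry v)) {M : ℝ}
    (hM : ∀ τ y, ‖v τ y‖ ≤ M) {c : ℝ → E} {L : E} {s : ℝ} (hc : HasDerivAt c L s)
    (hvc : ContinuousAt (uncurry v) (s, c s)) :
    HasDerivAt (fun τ => ω s τ (c τ)) (L - v s (c s)) s := by
  set g : ℝ → E := fun τ => ω s τ (c τ)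
  have hback : ∀ τ, ω τ s (g τ) = c τ := fun τ => by
    rw [flow_comp hω hinit hv, hinit]
  have hgs : g s = c s := hinit s (c s)
  have hg : Tendsto g (𝓝 s) (𝓝 (c s)) := by
    have hgc : Tendsto (fun τ => g τ - c τ) (𝓝 s) (𝓝 0) := by
      have hlin : Continuous fun τ : ℝ => M * |τ - s| := by fun_prop
      refine squeeze_zero_norm (fun τ => ?_) (by simpa using hlin.tendsto s)
      rw [← hback τ, norm_sub_rev]
      exact norm_flow_sub_le hω hinit hM τ s (g τ)
    simpa using hgc.add hc.continuousAt.tendsto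
  rw [hasDerivAt_iff_isLittleO]
  have hsplit : (fun τ => g τ - g s - (τ - s) • (L - v s (c s))) = fun τ =>
      (c τ - c s - (τ - s) • L) - (ω τ s (g τ) - g τ - (τ - s) • v s (c s)) := by
    funext τ
    rw [hback, hgs, smul_sub]
    abel
  rw [hsplit]
  exact (hasDerivAt_iff_isLittleO.1 hc).sub (isLittleO_flow_sub hω hinit hM hvc hg)

end Flow

theorem stmt12_general (aj ak : ℝ → ℝ → ℝ) (Λ₀ : ℝ) (hΛ : 0 < Λ₀)
    (hak : ContDiff ℝ 1 (Function.uncurry ak))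
    (hbj : ∀ x t : ℝ, Λ₀ ≤ |aj x t|) (hbk : ∀ x t : ℝ, Λ₀ ≤ |ak x t|)
    (ωj ωk : ℝ → ℝ → ℝ → ℝ)
    (hωj : ∀ ξ x t : ℝ, HasDerivAt (fun ξ' => ωj ξ' x t) (1 / aj ξ (ωj ξ x t)) ξ)
    (hωk : ∀ ξ x t : ℝ, HasDerivAt (fun ξ' => ωk ξ' x t) (1 / ak ξ (ωk ξ x t)) ξ)
    (hωkinit : ∀ x t : ℝ, ωk x x t = t)
    (D : ℝ → ℝ → ℝ → ℝ)
    (hD : ∀ η ξ s : ℝ, HasDerivAt (fun s' => ωk η ξ s') (D η ξ s) s)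
    (η x t : ℝ) :
    ∀ ξ : ℝ, HasDerivAt (fun ξ' => ωk η ξ' (ωj ξ' x t))
      ((ak ξ (ωj ξ x t) - aj ξ (ωj ξ x t)) / (aj ξ (ωj ξ x t) * ak ξ (ωj ξ x t)) *
        D η ξ (ωj ξ x t)) ξ := by
  intro ξ
  have hne : ∀ (a : ℝ → ℝ → ℝ), (∀ x t, Λ₀ ≤ |a x t|) → ∀ x t, a x t ≠ 0 :=
    fun a hb x t => abs_pos.1 (hΛ.trans_le (hb x t))
  have hvk : ContDiff ℝ 1 (uncurry fun τ y => 1 / ak τ y) :=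
    contDiff_const.div hak fun p => hne ak hbk p.1 p.2
  have hbound : ∀ τ y, ‖1 / ak τ y‖ ≤ 1 / Λ₀ := fun τ y => by
    rw [norm_div, norm_one, Real.norm_eq_abs]
    exact one_div_le_one_div_of_le hΛ (hbk τ y)
  have hflow := flow_comp hωk hωkinit hvk.locallyLipschitz
  have hg := hasDerivAt_flow_back hωk hωkinit hvk.locallyLipschitz hbound (hωj ξ x t)
    hvk.continuous.continuousAt
  have hθ := (hD η ξ (ωj ξ x t)).comp_of_eq ξ hg (hωkinit ξ _).symm
  have hcomp : (fun s' => ωk η ξ s') ∘ (fun τ => ωk ξ τ (ωj τ x t)) =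
      fun ξ' => ωk η ξ' (ωj ξ' x t) := funext fun ξ' => hflow η ξ ξ' _
  rw [hcomp] at hθ
  refine hθ.congr_deriv ?_
  field_simp [hne aj hbj ξ (ωj ξ x t), hne ak hbk ξ (ωj ξ x t)]

/-- Jacobian of the change of variables along intersecting characteristics:
`d/dξ [ω_k(η, ξ, ω_j(ξ,x,t))] = ((a_k - a_j)/(a_j a_k))(ξ, ω_j(ξ,x,t)) · ∂₃ω_k(η,ξ,ω_j(ξ,x,t))`. -/
theorem stmt12 (aj ak : ℝ → ℝ → ℝ) (Λ₀ : ℝ) (hΛ : 0 < Λ₀)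
    (haj : ContDiff ℝ 1 (Function.uncurry aj))
    (hak : ContDiff ℝ 1 (Function.uncurry ak))
    (hbj : ∀ x t : ℝ, Λ₀ ≤ |aj x t|) (hbk : ∀ x t : ℝ, Λ₀ ≤ |ak x t|)
    (ωj ωk : ℝ → ℝ → ℝ → ℝ)
    (hωj : ∀ ξ x t : ℝ, HasDerivAt (fun ξ' => ωj ξ' x t) (1 / aj ξ (ωj ξ x t)) ξ)
    (hωjinit : ∀ x t : ℝ, ωj x x t = t)
    (hωk : ∀ ξ x t : ℝ, HasDerivAt (fun ξ' => ωk ξ' x t) (1 / ak ξ (ωk ξ x t)) ξ)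
    (hωkinit : ∀ x t : ℝ, ωk x x t = t)
    (D : ℝ → ℝ → ℝ → ℝ)
    (hD : ∀ η ξ s : ℝ, HasDerivAt (fun s' => ωk η ξ s') (D η ξ s) s)
    (η x t : ℝ) :
    ∀ ξ : ℝ, HasDerivAt (fun ξ' => ωk η ξ' (ωj ξ' x t))
      ((ak ξ (ωj ξ x t) - aj ξ (ωj ξ x t)) / (aj ξ (ωj ξ x t) * ak ξ (ωj ξ x t)) *
        D η ξ (ωj ξ x t)) ξ :=
  stmt12_general aj ak Λ₀ hΛ hak hbj hbk ωj ωk hωj hωk hωkinit D hD η x t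
end

section
/- Let μ > 0 and ν > (μ+1)/(1 − e^{−μ}). Set a = μ − ν and b = ν e^{−μ}. Then the real equation x + a + b e^{−x} = 0 has a solution x > 0. -/
open Real Set

theorem exists_pos_add_add_mul_exp_neg_eq_zero {a b : ℝ} (hab : a + b < 0) :
    ∃ x : ℝ, 0 < x ∧ x + a + b * exp (-x) = 0 := by
  set f : ℝ → ℝ := fun x => x + a + b * exp (-x)
  have hb : -|b| ≤ b := neg_abs_le b
  have hx₁ : 0 ≤ |b| - a := by linarith
  have hf₀ : f 0 < 0 := by simpa [f] using hab
  -- At `x = |b| - a ≥ 0` the value is `|b| + b e^{-x} ≥ 0`, whatever the sign of `b`.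
  have hf₁ : 0 ≤ f (|b| - a) := by
    have hexp : exp (-(|b| - a)) ≤ 1 := exp_le_one_iff.2 (by linarith)
    have : |b| * exp (-(|b| - a)) ≤ |b| := mul_le_of_le_one_right (abs_nonneg b) hexp
    have : -|b| * exp (-(|b| - a)) ≤ b * exp (-(|b| - a)) :=
      mul_le_mul_of_nonneg_right hb (exp_pos _).le
    simp only [f]
    linarith
  have hcont : ContinuousOn f (Icc 0 (|b| - a)) := by fun_prop
  obtain ⟨x, hx, hfx⟩ := intermediate_value_Ioc hx₁ hcont ⟨hf₀, hf₁⟩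
  exact ⟨x, hx.1, hfx⟩

/-- For `ν > (μ+1)/(1 - e^{-μ})`, the real equation `x + (μ - ν) + ν e^{-μ} e^{-x} = 0`
has a positive solution. -/
theorem stmt17 (μ ν : ℝ) (hμ : 0 < μ)
    (hν : (μ + 1) / (1 - Real.exp (-μ)) < ν) :
    ∃ x : ℝ, 0 < x ∧ x + (μ - ν) + ν * Real.exp (-μ) * Real.exp (-x) = 0 := by
  have hden : 0 < 1 - exp (-μ) := sub_pos.2 (exp_lt_one_iff.2 (neg_lt_zero.2 hμ))
  have hν' : μ + 1 < ν * (1 - exp (-μ)) := (div_lt_iff₀ hden).1 hν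
  exact exists_pos_add_add_mul_exp_neg_eq_zero (by linarith)
end
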